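/- Let X be a metric space, let m be a σ-algebra on X containing the Borel σ-algebra, and let μ be a measure on (X, m) that is finite on bounded m-measurable sets. Suppose μ is regular in the sense that for every m-measurable set A there exists a Borel set B ⊇ A with μ(A) = μ(B). Let 1 ≤ p < ∞ and η ∈ (0,1]. Then the Hölder continuous functions of exponent η with bounded support are dense in L^p(μ): for every f ∈ L^p(μ) and ε > 0 there is g : X → ℝ with bounded support and |g(x) − g(y)| ≤ C · d(x,y)^η for some C and all x, y, such that ‖f − g‖_{L^p(μ)} < ε. -/

import Mathlib

/-!
By `MemLp.induction_dense` it suffices to approximate `c • 𝟙_s`, for `s` of finite measure, by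
Lipschitz functions with bounded support; such functions are bounded, hence `η`-Hölder for every
`η ≤ 1`. Regularity makes `s` `μ`-a.e. equal to a Borel set, on which `μ` agrees with its trace
`μ.trim hm` on the Borel σ-algebra. That trace is finite on bounded sets, hence closed-regular, so
the Borel set is approximated from inside by a closed bounded set `F`, and `𝟙_F` by the thickened
indicators of `F`, since the thickenings of `F` shrink to `F` in measure.
-/

open MeasureTheory Bornology Set Metric Filter Topology Function
open scoped ENNReal NNReal

section Holder

variable {X Y : Type*} [PseudoMetricSpace X] [PseudoMetricSpace Y]

theorem holderWith_zero_of_forall_edist_le {C : ℝ≥0} {f : X → Y}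
    (h : ∀ x y, edist (f x) (f y) ≤ C) : HolderWith C 0 f :=
  fun x y => by simpa using h x y

theorem LipschitzWith.isBounded_range_of_isBounded_support [Zero Y] {K : ℝ≥0} {f : X → Y}
    (hf : LipschitzWith K f) (hs : IsBounded (support f)) : IsBounded (range f) :=
  ((hf.isBounded_image hs).insert 0).subset (range_subset_insert_image_support f)

theorem LipschitzWith.exists_holderWith_of_isBounded_support [Zero Y] {K : ℝ≥0} {f : X → Y}
    (hf : LipschitzWith K f) (hs : IsBounded (support f)) {r : ℝ≥0} (hr : r ≤ 1) :
    ∃ C, HolderWith C r f := by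
  have hD := (hf.isBounded_range_of_isBounded_support hs).ediam_ne_top
  have hosc : ∀ x y, edist (f x) (f y) ≤ (ediam (range f)).toNNReal := fun x y => by
    rw [ENNReal.coe_toNNReal hD]
    exact edist_le_ediam_of_mem (mem_range_self x) (mem_range_self y)
  exact ⟨_, (holderWith_zero_of_forall_edist_le hosc).of_le_of_le (holderWith_one.2 hf) zero_le hr⟩

end Holder

theorem abs_thickenedIndicator_sub_indicator_le {X : Type*} [PseudoEMetricSpace X] {t : ℝ}
    (ht : 0 < t) {F s : Set X} (hFs : F ⊆ s) (x : X) :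
    |(thickenedIndicator ht F x : ℝ) - s.indicator 1 x|
      ≤ ((s ∪ thickening t F) \ F).indicator 1 x := by
  by_cases hxF : x ∈ F
  · simp [thickenedIndicator_one ht F hxF, hFs hxF, hxF]
  by_cases hx : x ∈ s ∪ thickening t F
  · have h₀ := (thickenedIndicator ht F x).2
    have h₁ : (thickenedIndicator ht F x : ℝ) ≤ 1 := by
      exact_mod_cast thickenedIndicator_le_one ht F x
    rw [indicator_of_mem (show x ∈ (s ∪ thickening t F) \ F from ⟨hx, hxF⟩), abs_sub_le_iff]
    by_cases hxs : x ∈ s <;>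
      simp only [hxs, indicator_of_mem, indicator_of_notMem, not_false_eq_true, Pi.one_apply] <;>
      constructor <;> linarith
  · simp only [mem_union, not_or] at hx
    simp [thickenedIndicator_zero ht F hx.2, hx.1, hx.2]

section BorelSpace

variable {X : Type*} [MetricSpace X] [MeasurableSpace X]

theorem exists_pos_measure_thickening_sdiff_lt [OpensMeasurableSpace X] {ν : Measure X}
    (hν : ∀ s, IsBounded s → ν s ≠ ∞) {F : Set X} (hFc : IsClosed F) (hFb : IsBounded F)
    {δ : ℝ≥0∞} (hδ : δ ≠ 0) : ∃ t > 0, ν (thickening t F \ F) < δ := by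
  have hlim := tendsto_measure_thickening_of_isClosed ⟨1, one_pos, hν _ hFb.thickening⟩ hFc
  obtain ⟨t, ht, htpos⟩ :=
    ((hlim.eventually_lt_const (ENNReal.lt_add_right (hν F hFb) hδ)).and
      self_mem_nhdsWithin).exists
  exact ⟨t, htpos, measure_sdiff_lt_of_lt_add hFc.nullMeasurableSet
    (self_subset_thickening htpos F) (hν F hFb) ht⟩

theorem exists_isClosed_isBounded_subset_measure_sdiff_lt [BorelSpace X] (ν : Measure X)
    {s : Set X} (hs : MeasurableSet s) (hνs : ν s ≠ ∞) {ε : ℝ≥0∞} (hε : ε ≠ 0) :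
    ∃ F ⊆ s, IsClosed F ∧ IsBounded F ∧ ν (s \ F) < ε := by
  rcases s.eq_empty_or_nonempty with rfl | ⟨x₀, -⟩
  · exact ⟨∅, empty_subset _, isClosed_empty, isBounded_empty, by simpa [pos_iff_ne_zero]⟩
  have hε₂ : ε / 2 ≠ 0 := (ENNReal.half_pos hε).ne'
  have hfar : Tendsto (fun n : ℕ => ν (s \ ball x₀ n)) atTop (𝓝 0) := by
    have := tendsto_measure_iInter_atTop (μ := ν) (s := fun n : ℕ => s \ ball x₀ n)
      (fun n => (hs.diff measurableSet_ball).nullMeasurableSet)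
      (fun i j hij => sdiff_subset_sdiff_right (ball_subset_ball (Nat.cast_le.2 hij)))
      ⟨0, ne_top_of_le_ne_top hνs (measure_mono sdiff_subset)⟩
    rwa [← sdiff_iUnion, iUnion_ball_nat, sdiff_univ, measure_empty] at this
  obtain ⟨n, hn⟩ := (hfar.eventually_lt_const (pos_iff_ne_zero.2 hε₂)).exists
  have : IsFiniteMeasure (ν.restrict s) := isFiniteMeasure_restrict.2 hνs
  obtain ⟨F, hF, hFc, hνF⟩ := (hs.inter (measurableSet_ball (x := x₀) (ε := n)))
    |>.exists_isClosed_sdiff_lt (μ := ν.restrict s) (measure_ne_top _ _) hε₂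
  rw [Measure.restrict_apply' hs,
    inter_eq_self_of_subset_left (sdiff_subset.trans inter_subset_left)] at hνF
  refine ⟨F, hF.trans inter_subset_left, hFc,
    isBounded_ball.subset (hF.trans inter_subset_right), ?_⟩
  calc ν (s \ F) ≤ ν (s \ ball x₀ n) + ν ((s ∩ ball x₀ n) \ F) := by
        refine (measure_mono fun x hx => ?_).trans (measure_union_le _ _)
        by_cases hxb : x ∈ ball x₀ n
        exacts [Or.inr ⟨⟨hx.1, hxb⟩, hx.2⟩, Or.inl ⟨hx.1, hxb⟩]
    _ < ε / 2 + ε / 2 := ENNReal.add_lt_add hn hνF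
    _ = ε := ENNReal.add_halves ε

theorem exists_lipschitz_isBounded_support_eLpNorm_sub_indicator_le [BorelSpace X]
    {ν : Measure X} (hν : ∀ s, IsBounded s → ν s ≠ ∞) {p : ℝ≥0∞} (hp : p ≠ ∞) (c : ℝ)
    {s : Set X} (hs : MeasurableSet s) (hνs : ν s ≠ ∞) {ε : ℝ≥0∞} (hε : ε ≠ 0) :
    ∃ g : X → ℝ, eLpNorm (g - s.indicator fun _ => c) p ν ≤ ε ∧
      IsBounded (support g) ∧ ∃ K, LipschitzWith K g := by
  obtain ⟨η, hη, hηε⟩ := exists_eLpNorm_indicator_le (μ := ν) hp c hε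
  have hη₂ : (η / 2 : ℝ≥0∞) ≠ 0 := (ENNReal.half_pos (by exact_mod_cast hη.ne')).ne'
  obtain ⟨F, hFs, hFc, hFb, hsF⟩ := exists_isClosed_isBounded_subset_measure_sdiff_lt ν hs hνs hη₂
  obtain ⟨t, ht, hFt⟩ := exists_pos_measure_thickening_sdiff_lt hν hFc hFb hη₂
  have hE : ν ((s ∪ thickening t F) \ F) ≤ η := calc
    ν ((s ∪ thickening t F) \ F) ≤ ν (s \ F) + ν (thickening t F \ F) := by
      rw [union_sdiff_distrib]; exact measure_union_le _ _
    _ ≤ η / 2 + η / 2 := add_le_add hsF.le hFt.le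
    _ = η := ENNReal.add_halves _
  refine ⟨fun x => c * thickenedIndicator ht F x, ?_, (hFb.thickening (δ := t)).subset ?_,
    _, (lipschitzWith_smul c).comp (NNReal.isometry_coe.lipschitz.comp
      (lipschitzWith_thickenedIndicator ht F))⟩
  · refine (eLpNorm_mono fun x => ?_).trans (hηε _ hE)
    have hc : ∀ A : Set X, A.indicator (fun _ => c) x = c * A.indicator 1 x := fun A => by
      by_cases hx : x ∈ A <;> simp [hx]
    simp only [Pi.sub_apply, hc, ← mul_sub, norm_mul]
    gcongr
    exact (abs_thickenedIndicator_sub_indicator_le ht hFs x).trans (le_abs_self _)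
  · intro x hx
    by_contra hxt
    exact hx (by simp [thickenedIndicator_zero ht F hxt])

end BorelSpace

section Regular

variable {X : Type*} [MetricSpace X] [m : MeasurableSpace X] {μ : Measure X}

theorem exists_lipschitz_isBounded_support_eLpNorm_sub_indicator_le_of_regular
    (hm : borel X ≤ m) (hμ : ∀ A : Set X, MeasurableSet A → IsBounded A → μ A < ⊤)
    (hreg : ∀ A : Set X, MeasurableSet A →
      ∃ B : Set X, MeasurableSet[borel X] B ∧ A ⊆ B ∧ μ A = μ B)
    {p : ℝ≥0∞} (hp : p ≠ ∞) (c : ℝ) {s : Set X} (hs : MeasurableSet s) (hμs : μ s < ∞)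
    {ε : ℝ≥0∞} (hε : ε ≠ 0) :
    ∃ g : X → ℝ, eLpNorm (g - s.indicator fun _ => c) p μ ≤ ε ∧
      IsBounded (support g) ∧ ∃ K, LipschitzWith K g := by
  obtain ⟨B, hB, hsB, hμB⟩ := hreg s hs
  have hsB_ae : s =ᵐ[μ] B :=
    ae_eq_of_subset_of_measure_ge hsB hμB.ge hs.nullMeasurableSet (hμB ▸ hμs.ne)
  have hν : ∀ A, IsBounded A → μ.trim hm A ≠ ∞ := fun A hA => by
    have hA' : MeasurableSet[borel X] (closure A) :=
      (MeasurableSpace.measurableSet_generateFrom isClosed_closure.isOpen_compl).of_compl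
    refine ne_top_of_le_ne_top ?_ (measure_mono subset_closure)
    rw [trim_measurableSet_eq hm hA']
    exact (hμ _ (hm _ hA') hA.closure).ne
  obtain ⟨g, hg, hgs, K, hK⟩ := @exists_lipschitz_isBounded_support_eLpNorm_sub_indicator_le
    X _ (borel X) (@BorelSpace.mk X _ (borel X) rfl) (μ.trim hm) hν p hp c B hB
    (by rw [trim_measurableSet_eq hm hB, ← hμB]; exact hμs.ne) ε hε
  have hmeas : StronglyMeasurable[borel X] (g - B.indicator fun _ => c) :=
    (hK.continuous.borel_measurable.sub (measurable_const.indicator hB)).stronglyMeasurable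
  refine ⟨g, ?_, hgs, K, hK⟩
  rwa [eLpNorm_congr_ae (EventuallyEq.rfl.sub (indicator_ae_eq_of_ae_eq_set hsB_ae)),
    ← eLpNorm_trim hm hmeas]

theorem MeasureTheory.MemLp.exists_lipschitz_isBounded_support_eLpNorm_sub_le_of_regular
    (hm : borel X ≤ m) (hμ : ∀ A : Set X, MeasurableSet A → IsBounded A → μ A < ⊤)
    (hreg : ∀ A : Set X, MeasurableSet A →
      ∃ B : Set X, MeasurableSet[borel X] B ∧ A ⊆ B ∧ μ A = μ B)
    {p : ℝ≥0∞} (hp : p ≠ ∞) {f : X → ℝ} (hf : MemLp f p μ) {ε : ℝ≥0∞} (hε : ε ≠ 0) :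
    ∃ g : X → ℝ, eLpNorm (f - g) p μ ≤ ε ∧ IsBounded (support g) ∧ ∃ K, LipschitzWith K g := by
  have : OpensMeasurableSpace X := ⟨hm⟩
  refine hf.induction_dense hp _
    (fun c s hs hμs ε hε => exists_lipschitz_isBounded_support_eLpNorm_sub_indicator_le_of_regular
      hm hμ hreg hp c hs hμs hε) ?_ ?_ hε
  · rintro f g ⟨hf, Kf, hKf⟩ ⟨hg, Kg, hKg⟩
    exact ⟨(hf.union hg).subset (support_add f g), _, hKf.add hKg⟩
  · rintro g ⟨-, K, hK⟩
    exact hK.continuous.aestronglyMeasurable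

end Regular

theorem holder_boundedSupport_dense_Lp_of_regular_general
    {X : Type*} [MetricSpace X] [m : MeasurableSpace X]
    (hm : borel X ≤ m)
    (μ : Measure X)
    (hμ : ∀ A : Set X, MeasurableSet A → IsBounded A → μ A < ⊤)
    (hreg : ∀ A : Set X, MeasurableSet A →
      ∃ B : Set X, MeasurableSet[borel X] B ∧ A ⊆ B ∧ μ A = μ B)
    (p : ℝ)
    (η : ℝ) (hη₀ : 0 < η) (hη₁ : η ≤ 1)
    (f : X → ℝ) (hf : MemLp f (ENNReal.ofReal p) μ)
    (ε : ℝ) (hε : 0 < ε) :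
    ∃ (g : X → ℝ) (C : ℝ),
      IsBounded {x | g x ≠ 0} ∧
      (∀ x y : X, |g x - g y| ≤ C * dist x y ^ η) ∧
      eLpNorm (fun x => f x - g x) (ENNReal.ofReal p) μ < ENNReal.ofReal ε := by
  obtain ⟨g, hfg, hgs, K, hK⟩ := hf.exists_lipschitz_isBounded_support_eLpNorm_sub_le_of_regular
    hm hμ hreg ENNReal.ofReal_ne_top (ε := ENNReal.ofReal (ε / 2)) (by simpa using half_pos hε)
  obtain ⟨C, hC⟩ := hK.exists_holderWith_of_isBounded_support hgs (Real.toNNReal_le_one.2 hη₁)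
  refine ⟨g, C, hgs, fun x y => ?_, hfg.trans_lt ?_⟩
  · simpa [Real.dist_eq, Real.coe_toNNReal η hη₀.le] using hC.dist_le x y
  · exact (ENNReal.ofReal_lt_ofReal_iff hε).2 (half_lt_self hε)

/-- Corrected form of Proposition 4.5 of Aimar–Hartzstein. Let `X` be a metric space,
`m` a σ-algebra containing the Borel σ-algebra, and `μ` a measure on `(X, m)` finite on
bounded `m`-measurable sets, regular in the sense that every `m`-measurable set has a
Borel superset of the same measure. Then for `1 ≤ p < ∞` and `η ∈ (0,1]`, Hölder
continuous functions of exponent `η` with bounded support are dense in `L^p(μ)`. -/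
theorem holder_boundedSupport_dense_Lp_of_regular
    {X : Type*} [MetricSpace X] [m : MeasurableSpace X]
    (hm : borel X ≤ m)
    (μ : Measure X)
    (hμ : ∀ A : Set X, MeasurableSet A → IsBounded A → μ A < ⊤)
    (hreg : ∀ A : Set X, MeasurableSet A →
      ∃ B : Set X, MeasurableSet[borel X] B ∧ A ⊆ B ∧ μ A = μ B)
    (p : ℝ) (hp : 1 ≤ p)
    (η : ℝ) (hη₀ : 0 < η) (hη₁ : η ≤ 1)
    (f : X → ℝ) (hf : MemLp f (ENNReal.ofReal p) μ)
    (ε : ℝ) (hε : 0 < ε) :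
    ∃ (g : X → ℝ) (C : ℝ),
      IsBounded {x | g x ≠ 0} ∧
      (∀ x y : X, |g x - g y| ≤ C * dist x y ^ η) ∧
      eLpNorm (fun x => f x - g x) (ENNReal.ofReal p) μ < ENNReal.ofReal ε :=
  holder_boundedSupport_dense_Lp_of_regular_general (m := m) hm μ hμ hreg p η hη₀ hη₁ f hf ε hε
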